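/- For a zero-mean wide-sense stationary process Y with absolutely summable autocorrelation R (Σ_τ |R[τ]| < ∞), and fixed distinct frequency indices with f_k = k/T, f_{k'} = k'/T held at fixed distinct rational values as T → ∞, the cross-correlation E[F_k conj(F_{k'})] of normalized DFT coefficients tends to 0. -/

import Mathlib

/-!
Write `w = e^{2πi(f' - f)}`; then `w ≠ 1` because `0 < |f' - f| < 1`. Since `k = fT` and
`k' = f'T`, the `(t, t')` term of `T · E[F_k conj(F_{k'})]` is `R[t - t'] e^{-2πif(t - t')} w^{t'}`.
Grouping the terms by the lag `τ = t - t'`, the `t'` belonging to a fixed lag form an interval,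
over which the geometric sum of `w^{t'}` has modulus at most `2 / |w - 1|`. Hence
`|E[F_k conj(F_{k'})]| ≤ 2 ∑ |R| / (|w - 1| T)`.
-/

open Finset Filter

/-- Cross-correlation `E[F_k conj(F_{k'})]` of normalized DFT coefficients of a zero-mean
wide-sense stationary process with autocorrelation `R`, expressed through `R`:
`(1/T) ∑_{t,t'} R[t-t'] e^{-i2πkt/T} e^{i2πk't'/T}`. -/
noncomputable def dftCross (R : ℤ → ℝ) (T k k' : ℕ) : ℂ :=
  (1 / (T : ℂ)) *
    ∑ t : Fin T, ∑ t' : Fin T,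
      (R ((t : ℤ) - (t' : ℤ)) : ℂ) *
        Complex.exp (-(2 * Real.pi * Complex.I * (k : ℂ) * ((t : ℕ) : ℂ)) / (T : ℂ)) *
        Complex.exp ((2 * Real.pi * Complex.I * (k' : ℂ) * ((t' : ℕ) : ℂ)) / (T : ℂ))

open Real Complex

lemma norm_geom_sum_Ico_le {K : Type*} [NormedDivisionRing K] {w : K} (hw : w ≠ 1)
    (hw1 : ‖w‖ ≤ 1) (a b : ℕ) : ‖∑ i ∈ Ico a b, w ^ i‖ ≤ 2 / ‖w - 1‖ := by
  rcases le_or_gt a b with hab | hba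
  · rw [geom_sum_Ico hw hab, norm_div]
    gcongr
    calc ‖w ^ b - w ^ a‖ ≤ ‖w‖ ^ b + ‖w‖ ^ a := by
          simpa only [norm_pow] using norm_sub_le (w ^ b) (w ^ a)
      _ ≤ 2 := by linarith [pow_le_one₀ (norm_nonneg w) hw1 (n := a),
          pow_le_one₀ (norm_nonneg w) hw1 (n := b)]
  · rw [Ico_eq_empty_of_le hba.le, sum_empty, norm_zero]
    positivity

lemma sum_range_sum_range_eq_sum_Ioo_sum_Ico {M : Type*} [AddCommMonoid M] (F : ℤ → ℕ → M)
    (T : ℕ) :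
    ∑ t ∈ range T, ∑ t' ∈ range T, F (t - t') t' =
      ∑ τ ∈ Ioo (-T : ℤ) T, ∑ t' ∈ Ico (-τ).toNat (T - τ.toNat), F τ t' := by
  rw [sum_comm]
  have inner : ∀ t' ∈ range T, ∑ t ∈ range T, F (t - t') t' =
      ∑ τ ∈ Ico (-t' : ℤ) (T - t'), F τ t' := by
    intro t' _
    refine sum_nbij' (fun t => (t : ℤ) - t') (fun τ => (τ + t').toNat) ?_ ?_ ?_ ?_ ?_ <;>
      intro x hx <;> simp only [mem_range, mem_Ico] at hx ⊢ <;> omega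
  rw [sum_congr rfl inner]
  exact sum_comm' fun t' τ => by simp only [mem_range, mem_Ico, mem_Ioo]; omega

lemma norm_sum_range_sum_range_sub_mul_le {A : Type*} [NormedRing A] {g : ℤ → A}
    (hg : Summable fun τ => ‖g τ‖) {h : ℕ → A} {C : ℝ}
    (hC : ∀ a b, ‖∑ i ∈ Ico a b, h i‖ ≤ C) (T : ℕ) :
    ‖∑ t ∈ range T, ∑ t' ∈ range T, g (t - t') * h t'‖ ≤ C * ∑' τ, ‖g τ‖ := by
  have hC0 : 0 ≤ C := by simpa using hC 0 0
  rw [sum_range_sum_range_eq_sum_Ioo_sum_Ico (fun τ t' => g τ * h t')]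
  calc ‖∑ τ ∈ Ioo (-T : ℤ) T, ∑ t' ∈ Ico (-τ).toNat (T - τ.toNat), g τ * h t'‖
      ≤ ∑ τ ∈ Ioo (-T : ℤ) T, ‖g τ‖ * C := by
        refine (norm_sum_le _ _).trans (sum_le_sum fun τ _ => ?_)
        rw [← mul_sum]
        exact (norm_mul_le _ _).trans (by gcongr; exact hC _ _)
    _ ≤ (∑' τ, ‖g τ‖) * C := by
        rw [← sum_mul]
        gcongr
        exact hg.sum_le_tsum _ fun τ _ => norm_nonneg _
    _ = C * ∑' τ, ‖g τ‖ := mul_comm _ _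

lemma exp_two_pi_mul_I_ne_one {x : ℝ} (h0 : x ≠ 0) (h1 : |x| < 1) :
    cexp (↑(2 * π * x) * I) ≠ 1 := by
  intro h
  obtain ⟨n, hn⟩ :=
    Circle.exp_eq_one.mp (Circle.ext (by rw [Circle.coe_exp, Circle.coe_one]; exact h))
  have hxn : x = n := by nlinarith [pi_pos]
  obtain ⟨hlo, hhi⟩ := abs_lt.mp (hxn ▸ h1)
  have hn0 : n = 0 := by
    have : -1 < n := by exact_mod_cast hlo
    have : n < 1 := by exact_mod_cast hhi
    omega
  exact h0 (by rw [hxn, hn0, Int.cast_zero])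

lemma dftCross_eq_sum_range_sum_range {T : ℕ} (hT : T ≠ 0) (R : ℤ → ℝ) {f f' : ℝ}
    {k k' : ℕ} (hk : (k : ℝ) = f * T) (hk' : (k' : ℝ) = f' * T) :
    dftCross R T k k' = (1 / (T : ℂ)) * ∑ t ∈ range T, ∑ t' ∈ range T,
      (R (t - t') * cexp (↑(-(2 * π * f * (t - t' : ℤ))) * I)) *
        cexp (↑(2 * π * (f' - f)) * I) ^ t' := by
  have hTc : (T : ℂ) ≠ 0 := Nat.cast_ne_zero.mpr hT
  have hkc : (k : ℂ) = f * T := by exact_mod_cast hk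
  have hk'c : (k' : ℂ) = f' * T := by exact_mod_cast hk'
  simp only [dftCross, ← Fin.sum_univ_eq_sum_range]
  congr 1
  refine sum_congr rfl fun t _ => sum_congr rfl fun t' _ => ?_
  rw [← Complex.exp_nat_mul, mul_assoc _ (cexp _), mul_assoc _ (cexp _), ← Complex.exp_add,
    ← Complex.exp_add, hkc, hk'c]
  congr 2
  push_cast
  field_simp
  ring

lemma norm_dftCross_le {R : ℤ → ℝ} (hR : Summable fun τ => |R τ|) {f f' : ℝ}
    (hw : cexp (↑(2 * π * (f' - f)) * I) ≠ 1) {T k k' : ℕ}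
    (hk : (k : ℝ) = f * T) (hk' : (k' : ℝ) = f' * T) :
    ‖dftCross R T k k'‖ ≤ 2 / ‖cexp (↑(2 * π * (f' - f)) * I) - 1‖ * (∑' τ, |R τ|) / T := by
  rcases eq_or_ne T 0 with rfl | hT
  · simp [dftCross]
  have hnorm (τ : ℤ) : ‖(R τ : ℂ) * cexp (↑(-(2 * π * f * τ)) * I)‖ = |R τ| := by
    rw [norm_mul, norm_exp_ofReal_mul_I, mul_one, norm_real, Real.norm_eq_abs]
  have hg : Summable fun τ : ℤ => ‖(R τ : ℂ) * cexp (↑(-(2 * π * f * τ)) * I)‖ := by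
    simpa only [hnorm] using hR
  have hw1 : ‖cexp (↑(2 * π * (f' - f)) * I)‖ ≤ 1 := (norm_exp_ofReal_mul_I _).le
  rw [dftCross_eq_sum_range_sum_range hT R hk hk', norm_mul, one_div, norm_inv,
    Complex.norm_natCast, div_eq_inv_mul _ (T : ℝ)]
  gcongr
  simpa only [hnorm] using
    norm_sum_range_sum_range_sub_mul_le hg (norm_geom_sum_Ico_le hw hw1) T

theorem dft_asymptotic_decorrelation_general (R : ℤ → ℝ) (hR : Summable fun τ : ℤ => |R τ|)
    (f f' : ℝ) (hf0 : 0 ≤ f) (hf1 : f < 1) (hf'0 : 0 ≤ f') (hf'1 : f' < 1) (hne : f ≠ f')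
    (T : ℕ → ℕ) (hTmono : StrictMono T)
    (k k' : ℕ → ℕ)
    (hk : ∀ n, (k n : ℝ) = f * T n) (hk' : ∀ n, (k' n : ℝ) = f' * T n) :
    Tendsto (fun n => dftCross R (T n) (k n) (k' n)) atTop (nhds 0) := by
  have hw := exp_two_pi_mul_I_ne_one (sub_ne_zero.mpr hne.symm)
    (abs_sub_lt_iff.mpr ⟨by linarith, by linarith⟩)
  refine squeeze_zero_norm (fun n => norm_dftCross_le hR hw (hk n) (hk' n)) ?_
  exact tendsto_const_nhds.div_atTop (tendsto_natCast_atTop_atTop.comp hTmono.tendsto_atTop)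

/-- For a zero-mean wide-sense stationary process with absolutely summable autocorrelation
`R`, and frequency indices `k n`, `k' n` held at fixed distinct frequencies
`f = k n / T n ≠ f' = k' n / T n` as the sequence length `T n → ∞`, the cross-correlation
of normalized DFT coefficients tends to `0`. -/
theorem dft_asymptotic_decorrelation (R : ℤ → ℝ) (hR : Summable fun τ : ℤ => |R τ|)
    (f f' : ℝ) (hf0 : 0 ≤ f) (hf1 : f < 1) (hf'0 : 0 ≤ f') (hf'1 : f' < 1) (hne : f ≠ f')
    (T : ℕ → ℕ) (hTmono : StrictMono T) (hTpos : ∀ n, 0 < T n)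
    (k k' : ℕ → ℕ)
    (hk : ∀ n, (k n : ℝ) = f * T n) (hk' : ∀ n, (k' n : ℝ) = f' * T n) :
    Tendsto (fun n => dftCross R (T n) (k n) (k' n)) atTop (nhds 0) :=
  dft_asymptotic_decorrelation_general R hR f f' hf0 hf1 hf'0 hf'1 hne T hTmono k k' hk hk'
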